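/- Let R be a commutative ring, S a multiplicative subset of R, and A_1, …, A_n finitely many R-modules. Then the direct sum ⊕_{i=1}^n A_i is u-S-quasi-projective (resp. u-S-quasi-injective) if and only if A_i is u-S-projective (resp. u-S-injective) relative to A_j for all i, j ∈ {1, …, n}. -/

import Mathlib

universe u v w

variable (R : Type u) [CommRing R]

/-- An `R`-module `T` is uniformly `S`-torsion if there is `s ∈ S` with `s • T = 0`. -/
def IsUSTorsion (S : Submonoid R) (T : Type*) [AddCommGroup T] [Module R T] : Prop :=
  ∃ s ∈ S, ∀ t : T, s • t = 0

/-- `f` is a `u`-`S`-epimorphism if its cokernel is uniformly `S`-torsion. -/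
def IsUSEpi (S : Submonoid R) {M N : Type*} [AddCommGroup M] [Module R M]
    [AddCommGroup N] [Module R N] (f : M →ₗ[R] N) : Prop :=
  IsUSTorsion R S (N ⧸ LinearMap.range f)

/-- `f` is a `u`-`S`-monomorphism if its kernel is uniformly `S`-torsion. -/
def IsUSMono (S : Submonoid R) {M N : Type*} [AddCommGroup M] [Module R M]
    [AddCommGroup N] [Module R N] (f : M →ₗ[R] N) : Prop :=
  IsUSTorsion R S (LinearMap.ker f)

/-- `P` is `u`-`S`-projective relative to `M` if for every `u`-`S`-epimorphism
`f : M → N`, the induced map `Hom(P,M) → Hom(P,N)` is a `u`-`S`-epimorphism. -/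
def IsUSProjRel (S : Submonoid R) (P : Type w) [AddCommGroup P] [Module R P]
    (M : Type v) [AddCommGroup M] [Module R M] : Prop :=
  ∀ (N : Type v) [AddCommGroup N] [Module R N] (f : M →ₗ[R] N),
    IsUSEpi R S f → IsUSEpi R S (LinearMap.llcomp (σ₁₂ := RingHom.id R) (σ₁₃ := RingHom.id R) R P M N f)

/-- `E` is `u`-`S`-injective relative to `M` if for every `u`-`S`-monomorphism
`f : K → M`, the induced map `Hom(M,E) → Hom(K,E)` is a `u`-`S`-epimorphism. -/
def IsUSInjRel (S : Submonoid R) (E : Type w) [AddCommGroup E] [Module R E]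
    (M : Type v) [AddCommGroup M] [Module R M] : Prop :=
  ∀ (K : Type v) [AddCommGroup K] [Module R K] (f : K →ₗ[R] M),
    IsUSMono R S f → IsUSEpi R S (LinearMap.lcomp R E f)


section Lemmas

variable {R : Type u} [CommRing R] {S : Submonoid R}

theorem isUSEpi_iff {M N : Type*} [AddCommGroup M] [Module R M] [AddCommGroup N] [Module R N]
    (f : M →ₗ[R] N) : IsUSEpi R S f ↔ ∃ s ∈ S, ∀ y : N, ∃ x, f x = s • y := by
  constructor
  · rintro ⟨s, hs, h⟩
    refine ⟨s, hs, fun y => ?_⟩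
    have := h (Submodule.Quotient.mk y)
    rw [← Submodule.Quotient.mk_smul, Submodule.Quotient.mk_eq_zero] at this
    exact this
  · rintro ⟨s, hs, h⟩
    refine ⟨s, hs, fun t => ?_⟩
    obtain ⟨y, rfl⟩ := Submodule.Quotient.mk_surjective _ t
    rw [← Submodule.Quotient.mk_smul, Submodule.Quotient.mk_eq_zero]
    exact h y

theorem isUSMono_iff {M N : Type*} [AddCommGroup M] [Module R M] [AddCommGroup N] [Module R N]
    (f : M →ₗ[R] N) : IsUSMono R S f ↔ ∃ s ∈ S, ∀ x : M, f x = 0 → s • x = 0 := by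
  constructor
  · rintro ⟨s, hs, h⟩
    refine ⟨s, hs, fun x hx => ?_⟩
    have := h ⟨x, by simpa [LinearMap.mem_ker] using hx⟩
    exact congrArg Subtype.val this
  · rintro ⟨s, hs, h⟩
    refine ⟨s, hs, fun x => ?_⟩
    exact Subtype.ext (h x.1 (LinearMap.mem_ker.mp x.2))

theorem isUSProjRel_iff {P : Type w} [AddCommGroup P] [Module R P]
    {M : Type v} [AddCommGroup M] [Module R M] :
    IsUSProjRel R S P M ↔ ∀ (N : Type v) [AddCommGroup N] [Module R N] (f : M →ₗ[R] N),
      IsUSEpi R S f → ∃ t ∈ S, ∀ h : P →ₗ[R] N, ∃ g : P →ₗ[R] M, f ∘ₗ g = t • h := by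
  constructor
  · intro H N _ _ f hf
    obtain ⟨t, ht, h⟩ := (isUSEpi_iff _).mp (H N f hf)
    exact ⟨t, ht, fun h' => h h'⟩
  · intro H N _ _ f hf
    obtain ⟨t, ht, h⟩ := H N f hf
    exact (isUSEpi_iff _).mpr ⟨t, ht, fun h' => h h'⟩

theorem isUSInjRel_iff {E : Type w} [AddCommGroup E] [Module R E]
    {M : Type v} [AddCommGroup M] [Module R M] :
    IsUSInjRel R S E M ↔ ∀ (K : Type v) [AddCommGroup K] [Module R K] (f : K →ₗ[R] M),
      IsUSMono R S f → ∃ t ∈ S, ∀ h : K →ₗ[R] E, ∃ g : M →ₗ[R] E, g ∘ₗ f = t • h := by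
  constructor
  · intro H K _ _ f hf
    obtain ⟨t, ht, h⟩ := (isUSEpi_iff _).mp (H K f hf)
    exact ⟨t, ht, fun h' => h h'⟩
  · intro H K _ _ f hf
    obtain ⟨t, ht, h⟩ := H K f hf
    exact (isUSEpi_iff _).mpr ⟨t, ht, fun h' => h h'⟩

end Lemmas

section ProjLemmas

variable {R : Type u} [CommRing R] {S : Submonoid R}
variable {P : Type w} [AddCommGroup P] [Module R P]

theorem projRel_of_subsingleton {M : Type v} [AddCommGroup M] [Module R M] [Subsingleton M] :
    IsUSProjRel R S P M := by
  rw [isUSProjRel_iff]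
  intro N _ _ f hf
  obtain ⟨s, hs, h⟩ := (isUSEpi_iff f).mp hf
  refine ⟨s, hs, fun h' => ⟨0, ?_⟩⟩
  ext p
  obtain ⟨x, hx⟩ := h (h' p)
  have hx0 : f x = 0 := by rw [Subsingleton.elim x 0, map_zero]
  simp [← hx, hx0]

theorem projRel_congr_right {M M' : Type v} [AddCommGroup M] [Module R M]
    [AddCommGroup M'] [Module R M'] (e : M ≃ₗ[R] M') :
    IsUSProjRel R S P M → IsUSProjRel R S P M' := by
  rw [isUSProjRel_iff, isUSProjRel_iff]
  intro H N _ _ f hf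
  have hfe : IsUSEpi R S (f ∘ₗ (e : M →ₗ[R] M')) := by
    obtain ⟨s, hs, h⟩ := (isUSEpi_iff f).mp hf
    refine (isUSEpi_iff _).mpr ⟨s, hs, fun y => ?_⟩
    obtain ⟨x, hx⟩ := h y
    exact ⟨e.symm x, by simpa using hx⟩
  obtain ⟨t, ht, h⟩ := H N (f ∘ₗ (e : M →ₗ[R] M')) hfe
  refine ⟨t, ht, fun h' => ?_⟩
  obtain ⟨g, hg⟩ := h h'
  exact ⟨(e : M →ₗ[R] M') ∘ₗ g, by rw [← LinearMap.comp_assoc]; exact hg⟩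

theorem projRel_congr_right_iff {M M' : Type v} [AddCommGroup M] [Module R M]
    [AddCommGroup M'] [Module R M'] (e : M ≃ₗ[R] M') :
    IsUSProjRel R S P M ↔ IsUSProjRel R S P M' :=
  ⟨projRel_congr_right e, projRel_congr_right e.symm⟩

theorem projRel_of_prod_left {M₁ M₂ : Type v} [AddCommGroup M₁] [Module R M₁]
    [AddCommGroup M₂] [Module R M₂] :
    IsUSProjRel R S P (M₁ × M₂) → IsUSProjRel R S P M₁ := by
  rw [isUSProjRel_iff, isUSProjRel_iff]
  intro H N _ _ f hf
  obtain ⟨s, hs, hsur⟩ := (isUSEpi_iff f).mp hf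
  have hF : IsUSEpi R S (f.prodMap (LinearMap.id : M₂ →ₗ[R] M₂)) := by
    refine (isUSEpi_iff _).mpr ⟨s, hs, fun y => ?_⟩
    obtain ⟨x, hx⟩ := hsur y.1
    exact ⟨(x, s • y.2), by simp [hx, Prod.smul_def]⟩
  obtain ⟨t, ht, h⟩ := H (N × M₂) (f.prodMap LinearMap.id) hF
  refine ⟨t, ht, fun h' => ?_⟩
  obtain ⟨G, hG⟩ := h ((LinearMap.inl R N M₂) ∘ₗ h')
  refine ⟨(LinearMap.fst R M₁ M₂) ∘ₗ G, ?_⟩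
  ext p
  have := LinearMap.congr_fun hG p
  simp only [LinearMap.comp_apply, LinearMap.prodMap_apply, LinearMap.smul_apply,
    LinearMap.inl_apply, Prod.smul_def] at this ⊢
  exact congrArg Prod.fst this

theorem projRel_prod {M₁ M₂ : Type v} [AddCommGroup M₁] [Module R M₁]
    [AddCommGroup M₂] [Module R M₂] (h₁ : IsUSProjRel R S P M₁) (h₂ : IsUSProjRel R S P M₂) :
    IsUSProjRel R S P (M₁ × M₂) := by
  rw [isUSProjRel_iff] at h₁ h₂ ⊢
  intro N _ _ f hf
  obtain ⟨s, hs, hsur⟩ := (isUSEpi_iff f).mp hf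
  set f₁ : M₁ →ₗ[R] N := f ∘ₗ LinearMap.inl R M₁ M₂ with hf₁
  set f₂ : M₂ →ₗ[R] N := f ∘ₗ LinearMap.inr R M₁ M₂ with hf₂
  set q : N →ₗ[R] N ⧸ LinearMap.range f₂ := (LinearMap.range f₂).mkQ with hq
  have hsplit : ∀ x : M₁ × M₂, f x = f₁ x.1 + f₂ x.2 := by
    intro x
    rw [hf₁, hf₂]
    simp only [LinearMap.comp_apply, LinearMap.inl_apply, LinearMap.inr_apply, ← map_add]
    congr 1
    simp [Prod.ext_iff]
  have hqf₁ : IsUSEpi R S (q ∘ₗ f₁) := by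
    refine (isUSEpi_iff _).mpr ⟨s, hs, fun z => ?_⟩
    obtain ⟨y, rfl⟩ := Submodule.Quotient.mk_surjective _ z
    obtain ⟨x, hx⟩ := hsur y
    refine ⟨x.1, ?_⟩
    have h1 : q (f₂ x.2) = 0 := (Submodule.Quotient.mk_eq_zero _).mpr ⟨x.2, rfl⟩
    have h2 : q (f x) = q (s • y) := congrArg q hx
    rw [hsplit x, map_add, h1, add_zero] at h2
    rw [map_smul] at h2
    exact h2
  have hf₂' : IsUSEpi R S f₂.rangeRestrict := by
    refine (isUSEpi_iff _).mpr ⟨1, S.one_mem, fun y => ?_⟩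
    obtain ⟨x, hx⟩ := f₂.surjective_rangeRestrict y
    exact ⟨x, by simp [hx]⟩
  obtain ⟨t₁, ht₁, H₁⟩ := h₁ (N ⧸ LinearMap.range f₂) (q ∘ₗ f₁) hqf₁
  obtain ⟨t₂, ht₂, H₂⟩ := h₂ (LinearMap.range f₂) f₂.rangeRestrict hf₂'
  refine ⟨t₁ * t₂, S.mul_mem ht₁ ht₂, fun h => ?_⟩
  obtain ⟨g₁, hg₁⟩ := H₁ (q ∘ₗ h)
  set h' : P →ₗ[R] N := t₁ • h - f₁ ∘ₗ g₁ with hh'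
  have hmem : ∀ p, h' p ∈ LinearMap.range f₂ := by
    intro p
    have := LinearMap.congr_fun hg₁ p
    simp only [LinearMap.comp_apply, LinearMap.smul_apply] at this
    rw [← Submodule.Quotient.mk_eq_zero (LinearMap.range f₂)]
    show q (h' p) = 0
    simp only [hh', LinearMap.sub_apply, LinearMap.smul_apply, LinearMap.comp_apply,
      map_sub, map_smul, this]
    exact sub_self _
  set h'' : P →ₗ[R] LinearMap.range f₂ := h'.codRestrict _ hmem with hh''
  obtain ⟨g₂, hg₂⟩ := H₂ h''
  refine ⟨(t₂ • g₁).prod g₂, ?_⟩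
  ext p
  have e2 : f₂ (g₂ p) = t₂ • h' p := by
    have := LinearMap.congr_fun hg₂ p
    have := congrArg Subtype.val this
    simpa [hh''] using this
  have hsp : f (t₂ • g₁ p, g₂ p) = f₁ (t₂ • g₁ p) + f₂ (g₂ p) := hsplit _
  simp only [LinearMap.comp_apply, LinearMap.prod_apply, Function.prod, LinearMap.smul_apply]
  rw [hsp, e2, hh']
  simp only [LinearMap.sub_apply, LinearMap.smul_apply, LinearMap.comp_apply, map_smul,
    smul_sub, smul_smul, mul_comm t₁ t₂]
  abel

theorem projRel_prod_iff {M₁ M₂ : Type v} [AddCommGroup M₁] [Module R M₁]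
    [AddCommGroup M₂] [Module R M₂] :
    IsUSProjRel R S P (M₁ × M₂) ↔ IsUSProjRel R S P M₁ ∧ IsUSProjRel R S P M₂ := by
  refine ⟨fun H => ⟨projRel_of_prod_left H, ?_⟩, fun ⟨h₁, h₂⟩ => projRel_prod h₁ h₂⟩
  exact projRel_of_prod_left (projRel_congr_right (LinearEquiv.prodComm R M₁ M₂) H)

end ProjLemmas

/-- The linear equivalence `(∀ i : Fin (n+1), A i) ≃ₗ[R] A 0 × ∀ i : Fin n, A i.succ`. -/
def piFinSuccLinearEquiv {R : Type u} [CommRing R] {n : ℕ} (A : Fin (n + 1) → Type v)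
    [∀ i, AddCommGroup (A i)] [∀ i, Module R (A i)] :
    (∀ i, A i) ≃ₗ[R] A 0 × ∀ i : Fin n, A i.succ where
  toFun x := (x 0, fun i => x i.succ)
  map_add' x y := rfl
  map_smul' c x := rfl
  invFun x := Fin.cons x.1 x.2
  left_inv x := funext (Fin.cases rfl fun i => by simp)
  right_inv x := by simp

section ProjPi

variable {R : Type u} [CommRing R] {S : Submonoid R}
variable {P : Type w} [AddCommGroup P] [Module R P]

theorem projRel_pi_iff : ∀ (n : ℕ) (A : Fin n → Type v)
    [∀ i, AddCommGroup (A i)] [∀ i, Module R (A i)],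
    IsUSProjRel R S P (∀ i, A i) ↔ ∀ j, IsUSProjRel R S P (A j) := by
  intro n
  induction n with
  | zero =>
    intro A _ _
    exact ⟨fun _ j => j.elim0, fun _ => projRel_of_subsingleton⟩
  | succ n ih =>
    intro A _ _
    rw [projRel_congr_right_iff (piFinSuccLinearEquiv A), projRel_prod_iff,
      ih fun i => A i.succ]
    constructor
    · rintro ⟨h0, hs⟩ j
      exact Fin.cases h0 hs j
    · intro h
      exact ⟨h 0, fun i => h i.succ⟩

open DirectSum in
theorem projRel_directSum_right_iff (n : ℕ) (A : Fin n → Type v)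
    [∀ i, AddCommGroup (A i)] [∀ i, Module R (A i)] :
    IsUSProjRel R S P (⨁ i, A i) ↔ ∀ j, IsUSProjRel R S P (A j) := by
  rw [projRel_congr_right_iff (linearEquivFunOnFintype R (Fin n) A), projRel_pi_iff]

open DirectSum in
theorem projRel_directSum_left_iff (n : ℕ) (A : Fin n → Type v)
    [∀ i, AddCommGroup (A i)] [∀ i, Module R (A i)]
    (M : Type v) [AddCommGroup M] [Module R M] :
    IsUSProjRel R S (⨁ i, A i) M ↔ ∀ i, IsUSProjRel R S (A i) M := by
  constructor
  · intro H i
    rw [isUSProjRel_iff] at H ⊢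
    intro N _ _ f hf
    obtain ⟨t, ht, hH⟩ := H N f hf
    refine ⟨t, ht, fun h => ?_⟩
    obtain ⟨g, hg⟩ := hH (h ∘ₗ component R (Fin n) A i)
    refine ⟨g ∘ₗ lof R (Fin n) A i, ?_⟩
    ext a
    have := LinearMap.congr_fun hg (lof R (Fin n) A i a)
    simpa [component.lof_self] using this
  · intro H
    rw [isUSProjRel_iff]
    intro N _ _ f hf
    have := fun i => (isUSProjRel_iff.mp (H i)) N f hf
    choose t ht hH using this
    refine ⟨∏ i, t i, prod_mem fun i _ => ht i, fun h => ?_⟩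
    choose g hg using fun i => hH i (h ∘ₗ lof R (Fin n) A i)
    refine ⟨toModule R (Fin n) M fun i => (∏ j ∈ Finset.univ.erase i, t j) • g i, ?_⟩
    refine linearMap_ext R fun i => ?_
    ext a
    simp only [LinearMap.comp_apply, LinearMap.smul_apply, toModule_lof]
    have := LinearMap.congr_fun (hg i) a
    simp only [LinearMap.comp_apply, LinearMap.smul_apply] at this
    rw [map_smul, this, smul_smul, Finset.prod_erase_mul _ _ (Finset.mem_univ i)]

end ProjPi

section InjLemmas

variable {R : Type u} [CommRing R] {S : Submonoid R}
variable {E : Type w} [AddCommGroup E] [Module R E]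

theorem injRel_of_subsingleton {M : Type v} [AddCommGroup M] [Module R M] [Subsingleton M] :
    IsUSInjRel R S E M := by
  rw [isUSInjRel_iff]
  intro K _ _ f hf
  obtain ⟨s, hs, h⟩ := (isUSMono_iff f).mp hf
  refine ⟨s, hs, fun h' => ⟨0, ?_⟩⟩
  ext k
  have hk : s • k = 0 := h k (Subsingleton.elim _ _)
  simp only [LinearMap.comp_apply, LinearMap.zero_apply, LinearMap.smul_apply]
  rw [← map_smul, hk, map_zero]

theorem injRel_congr_right {M M' : Type v} [AddCommGroup M] [Module R M]
    [AddCommGroup M'] [Module R M'] (e : M ≃ₗ[R] M') :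
    IsUSInjRel R S E M → IsUSInjRel R S E M' := by
  rw [isUSInjRel_iff, isUSInjRel_iff]
  intro H K _ _ f hf
  have hf' : IsUSMono R S ((e.symm : M' →ₗ[R] M) ∘ₗ f) := by
    obtain ⟨s, hs, h⟩ := (isUSMono_iff f).mp hf
    refine (isUSMono_iff _).mpr ⟨s, hs, fun x hx => ?_⟩
    refine h x ?_
    simpa using congrArg e (show e.symm (f x) = 0 from hx)
  obtain ⟨t, ht, h⟩ := H K ((e.symm : M' →ₗ[R] M) ∘ₗ f) hf'
  refine ⟨t, ht, fun h' => ?_⟩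
  obtain ⟨g, hg⟩ := h h'
  exact ⟨g ∘ₗ (e.symm : M' →ₗ[R] M), by rw [LinearMap.comp_assoc]; exact hg⟩

theorem injRel_congr_right_iff {M M' : Type v} [AddCommGroup M] [Module R M]
    [AddCommGroup M'] [Module R M'] (e : M ≃ₗ[R] M') :
    IsUSInjRel R S E M ↔ IsUSInjRel R S E M' :=
  ⟨injRel_congr_right e, injRel_congr_right e.symm⟩

theorem injRel_of_prod_left {M₁ M₂ : Type v} [AddCommGroup M₁] [Module R M₁]
    [AddCommGroup M₂] [Module R M₂] :
    IsUSInjRel R S E (M₁ × M₂) → IsUSInjRel R S E M₁ := by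
  rw [isUSInjRel_iff, isUSInjRel_iff]
  intro H K _ _ f hf
  have hF : IsUSMono R S ((LinearMap.inl R M₁ M₂) ∘ₗ f) := by
    obtain ⟨s, hs, h⟩ := (isUSMono_iff f).mp hf
    refine (isUSMono_iff _).mpr ⟨s, hs, fun x hx => ?_⟩
    refine h x ?_
    have := congrArg Prod.fst hx
    simpa using this
  obtain ⟨t, ht, h⟩ := H K ((LinearMap.inl R M₁ M₂) ∘ₗ f) hF
  refine ⟨t, ht, fun h' => ?_⟩
  obtain ⟨g, hg⟩ := h h'
  exact ⟨g ∘ₗ LinearMap.inl R M₁ M₂, by rw [LinearMap.comp_assoc]; exact hg⟩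

theorem injRel_prod {M₁ M₂ : Type v} [AddCommGroup M₁] [Module R M₁]
    [AddCommGroup M₂] [Module R M₂] (h₁ : IsUSInjRel R S E M₁) (h₂ : IsUSInjRel R S E M₂) :
    IsUSInjRel R S E (M₁ × M₂) := by
  rw [isUSInjRel_iff] at h₁ h₂ ⊢
  intro K _ _ f hf
  obtain ⟨s, hs, hker⟩ := (isUSMono_iff f).mp hf
  set f₁ : K →ₗ[R] M₁ := (LinearMap.fst R M₁ M₂) ∘ₗ f with hf₁
  set f₂ : K →ₗ[R] M₂ := (LinearMap.snd R M₁ M₂) ∘ₗ f with hf₂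
  set K₁ : Submodule R K := LinearMap.ker f₁ with hK₁
  have hf₂' : IsUSMono R S (f₂ ∘ₗ K₁.subtype) := by
    refine (isUSMono_iff _).mpr ⟨s, hs, fun x hx => ?_⟩
    have hx1 : f₁ x.1 = 0 := x.2
    have hfx : f x.1 = 0 := by
      have : f x.1 = (f₁ x.1, f₂ x.1) := rfl
      rw [this, hx1]
      simp only [LinearMap.comp_apply, Submodule.subtype_apply] at hx
      rw [hx]
      rfl
    exact Subtype.ext (hker x.1 hfx)
  have hf₁' : IsUSMono R S (K₁.liftQ f₁ le_rfl) := by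
    refine (isUSMono_iff _).mpr ⟨1, S.one_mem, fun z hz => ?_⟩
    obtain ⟨x, rfl⟩ := Submodule.Quotient.mk_surjective _ z
    rw [one_smul, Submodule.Quotient.mk_eq_zero]
    rw [hK₁]; simpa using hz
  obtain ⟨t₂, ht₂, H₂⟩ := h₂ K₁ (f₂ ∘ₗ K₁.subtype) hf₂'
  obtain ⟨t₁, ht₁, H₁⟩ := h₁ (K ⧸ K₁) (K₁.liftQ f₁ le_rfl) hf₁'
  refine ⟨t₁ * t₂, S.mul_mem ht₁ ht₂, fun h => ?_⟩
  obtain ⟨g₂, hg₂⟩ := H₂ (h ∘ₗ K₁.subtype)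
  set h' : K →ₗ[R] E := t₂ • h - g₂ ∘ₗ f₂ with hh'
  have hker' : K₁ ≤ LinearMap.ker h' := by
    intro x hx
    have := LinearMap.congr_fun hg₂ ⟨x, hx⟩
    simp only [LinearMap.comp_apply, Submodule.subtype_apply, LinearMap.smul_apply] at this
    simp only [LinearMap.mem_ker, hh', LinearMap.sub_apply, LinearMap.smul_apply,
      LinearMap.comp_apply, this]
    exact sub_self _
  obtain ⟨g₁, hg₁⟩ := H₁ (K₁.liftQ h' hker')
  refine ⟨g₁ ∘ₗ LinearMap.fst R M₁ M₂ + t₁ • (g₂ ∘ₗ LinearMap.snd R M₁ M₂), ?_⟩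
  ext k
  have e1 : g₁ (f₁ k) = t₁ • h' k := by
    have := LinearMap.congr_fun hg₁ (Submodule.Quotient.mk k)
    simpa [Submodule.liftQ_apply] using this
  have hsplit : (g₁ ∘ₗ LinearMap.fst R M₁ M₂ + t₁ • (g₂ ∘ₗ LinearMap.snd R M₁ M₂)) (f k)
      = g₁ (f₁ k) + t₁ • g₂ (f₂ k) := rfl
  simp only [LinearMap.comp_apply, LinearMap.smul_apply]
  rw [hsplit, e1, hh']
  simp only [LinearMap.sub_apply, LinearMap.smul_apply, LinearMap.comp_apply, smul_sub,
    smul_smul]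
  abel

theorem injRel_prod_iff {M₁ M₂ : Type v} [AddCommGroup M₁] [Module R M₁]
    [AddCommGroup M₂] [Module R M₂] :
    IsUSInjRel R S E (M₁ × M₂) ↔ IsUSInjRel R S E M₁ ∧ IsUSInjRel R S E M₂ := by
  refine ⟨fun H => ⟨injRel_of_prod_left H, ?_⟩, fun ⟨h₁, h₂⟩ => injRel_prod h₁ h₂⟩
  exact injRel_of_prod_left (injRel_congr_right (LinearEquiv.prodComm R M₁ M₂) H)

theorem injRel_pi_iff : ∀ (n : ℕ) (A : Fin n → Type v)
    [∀ i, AddCommGroup (A i)] [∀ i, Module R (A i)],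
    IsUSInjRel R S E (∀ i, A i) ↔ ∀ j, IsUSInjRel R S E (A j) := by
  intro n
  induction n with
  | zero =>
    intro A _ _
    exact ⟨fun _ j => j.elim0, fun _ => injRel_of_subsingleton⟩
  | succ n ih =>
    intro A _ _
    rw [injRel_congr_right_iff (piFinSuccLinearEquiv A), injRel_prod_iff,
      ih fun i => A i.succ]
    constructor
    · rintro ⟨h0, hs⟩ j
      exact Fin.cases h0 hs j
    · intro h
      exact ⟨h 0, fun i => h i.succ⟩

open DirectSum in
theorem injRel_directSum_right_iff (n : ℕ) (A : Fin n → Type v)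
    [∀ i, AddCommGroup (A i)] [∀ i, Module R (A i)] :
    IsUSInjRel R S E (⨁ i, A i) ↔ ∀ j, IsUSInjRel R S E (A j) := by
  rw [injRel_congr_right_iff (linearEquivFunOnFintype R (Fin n) A), injRel_pi_iff]

open DirectSum in
theorem injRel_directSum_left_iff (n : ℕ) (A : Fin n → Type v)
    [∀ i, AddCommGroup (A i)] [∀ i, Module R (A i)]
    (M : Type v) [AddCommGroup M] [Module R M] :
    IsUSInjRel R S (⨁ i, A i) M ↔ ∀ i, IsUSInjRel R S (A i) M := by
  constructor
  · intro H i
    rw [isUSInjRel_iff] at H ⊢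
    intro K _ _ f hf
    obtain ⟨t, ht, hH⟩ := H K f hf
    refine ⟨t, ht, fun h => ?_⟩
    obtain ⟨g, hg⟩ := hH (lof R (Fin n) A i ∘ₗ h)
    refine ⟨component R (Fin n) A i ∘ₗ g, ?_⟩
    ext k
    have := LinearMap.congr_fun hg k
    simp only [LinearMap.comp_apply, LinearMap.smul_apply] at this ⊢
    rw [this, map_smul, component.lof_self]
  · intro H
    rw [isUSInjRel_iff]
    intro K _ _ f hf
    have := fun i => (isUSInjRel_iff.mp (H i)) K f hf
    choose t ht hH using this
    refine ⟨∏ i, t i, prod_mem fun i _ => ht i, fun h => ?_⟩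
    choose g hg using fun i => hH i (component R (Fin n) A i ∘ₗ h)
    refine ⟨∑ i, lof R (Fin n) A i ∘ₗ ((∏ j ∈ Finset.univ.erase i, t j) • g i), ?_⟩
    refine LinearMap.ext fun k => ?_
    simp only [LinearMap.comp_apply, LinearMap.coe_sum, Finset.sum_apply,
      LinearMap.smul_apply]
    have hterm : ∀ i, lof R (Fin n) A i ((∏ j ∈ Finset.univ.erase i, t j) • g i (f k))
        = (∏ j, t j) • of A i (h k i) := by
      intro i
      have := LinearMap.congr_fun (hg i) k
      simp only [LinearMap.comp_apply, LinearMap.smul_apply] at this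
      rw [this, ← apply_eq_component, smul_smul,
        Finset.prod_erase_mul _ _ (Finset.mem_univ i), map_smul, lof_eq_of]
    rw [Finset.sum_congr rfl fun i _ => hterm i, ← Finset.smul_sum, sum_univ_of]

end InjLemmas

open DirectSum in
theorem stmt18 (S : Submonoid R) (hS : (0 : R) ∉ S)
    (n : ℕ) (A : Fin n → Type v) [∀ i, AddCommGroup (A i)] [∀ i, Module R (A i)] :
    (IsUSProjRel R S (⨁ i, A i) (⨁ i, A i) ↔
      ∀ i j, IsUSProjRel R S (A i) (A j)) ∧
    (IsUSInjRel R S (⨁ i, A i) (⨁ i, A i) ↔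
      ∀ i j, IsUSInjRel R S (A i) (A j)) := by
  constructor
  · exact (projRel_directSum_left_iff n A _).trans
      (forall_congr' fun i => projRel_directSum_right_iff n A)
  · exact (injRel_directSum_left_iff n A _).trans
      (forall_congr' fun i => injRel_directSum_right_iff n A)
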